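/- arXiv:1802.01700 — 6 statements merged into one kernel-verified Lean document; each statement's English description precedes it below -/
import Mathlib

section
/- For the discrete Urysohn operator with matrix of size m × n (m ≥ 1, n ≥ 1), the matrix M^m whose rows enumerate all n^m possible quantised input sequences of length m (each row being the 0-1 indicator vector of the mn matrix entries that are summed to produce the output) has rank exactly mn − m + 1. -/
/-- The indicator matrix `M^m` of the discrete Urysohn operator: rows are indexed by
quantised input sequences `k : Fin m → Fin n`, columns by matrix positions
`(j, c) : Fin m × Fin n`, and the row of `k` has a `1` exactly at the positions
`(j, k_{m-j+1})` (i.e. `c = k (Fin.rev j)`), which are the entries of the Urysohn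
matrix summed to produce the output. -/
def uryM (m n : ℕ) : Matrix (Fin m → Fin n) (Fin m × Fin n) ℝ :=
  Matrix.of fun k jc => if k jc.1.rev = jc.2 then (1 : ℝ) else 0

namespace UryAux

open Submodule Finset

variable (m n : ℕ) [NeZero n]

/-- Auxiliary spanning family. -/
noncomputable def uryB : Option (Fin m × {c : Fin n // c ≠ 0}) → (Fin m × Fin n → ℝ)
  | none => fun jc => if jc.2 = 0 then 1 else 0
  | some p => fun jc =>
      (if jc = (p.1, p.2.1) then (1 : ℝ) else 0) - (if jc = (p.1, 0) then 1 else 0)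

lemma uryB_none_eq : uryB m n none = uryM m n (fun _ => 0) := by
  funext jc
  simp [uryB, uryM, eq_comm]

lemma uryB_some_mem (p : Fin m × {c : Fin n // c ≠ 0}) :
    uryB m n (some p) =
      uryM m n (fun i => if i = p.1.rev then p.2.1 else 0) - uryM m n (fun _ => 0) := by
  funext jc
  rcases jc with ⟨j, c⟩
  rcases p with ⟨j', c'⟩
  simp only [uryB, uryM, Matrix.of_apply, Pi.sub_apply, Prod.mk.injEq]
  by_cases hj : j = j'
  · subst hj
    simp only [Fin.rev_inj, if_pos rfl, true_and]
    by_cases h1 : c = c'.1 <;> by_cases h2 : c = 0 <;>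
      simp_all [eq_comm, c'.2]
  · have : ¬ (j.rev = j'.rev) := by simpa [Fin.rev_inj] using hj
    simp [hj, this, eq_comm]

lemma row_mem_span (k : Fin m → Fin n) :
    uryM m n k = uryB m n none +
      ∑ j : Fin m, (if h : k j.rev ≠ 0 then uryB m n (some (j, ⟨k j.rev, h⟩)) else 0) := by
  funext jc
  rcases jc with ⟨j, c⟩
  have hsum : ∀ i : Fin m, i ≠ j →
      (if h : k i.rev ≠ 0 then uryB m n (some (i, ⟨k i.rev, h⟩)) else 0) (j, c) = 0 := by
    intro i hi
    have hji : ¬ j = i := fun hh => hi hh.symm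
    by_cases h : k i.rev ≠ 0
    · simp [h, uryB, Prod.ext_iff, hji]
    · simp [h]
  rw [Pi.add_apply, Finset.sum_apply,
    Finset.sum_eq_single j (fun i _ hi => hsum i hi) (by simp)]
  simp only [uryM, Matrix.of_apply, uryB]
  by_cases h : k j.rev ≠ 0
  · simp only [dif_pos h, uryB, Prod.mk.injEq, true_and]
    by_cases h1 : c = k j.rev <;> by_cases h2 : c = 0 <;>
      simp_all [eq_comm]
  · push_neg at h
    by_cases h2 : c = 0 <;> simp_all [eq_comm]

lemma span_eq :
    span ℝ (Set.range (uryM m n)) = span ℝ (Set.range (uryB m n)) := by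
  apply le_antisymm
  · rw [span_le]
    rintro _ ⟨k, rfl⟩
    rw [row_mem_span]
    refine add_mem (subset_span ⟨none, rfl⟩) (sum_mem fun j _ => ?_)
    by_cases h : k j.rev ≠ 0
    · simp only [dif_pos h]
      exact subset_span ⟨_, rfl⟩
    · simp only [dif_neg h]
      exact zero_mem _
  · rw [span_le]
    rintro _ ⟨p, rfl⟩
    cases p with
    | none => rw [uryB_none_eq]; exact subset_span ⟨_, rfl⟩
    | some p =>
        rw [uryB_some_mem]
        exact sub_mem (subset_span ⟨_, rfl⟩) (subset_span ⟨_, rfl⟩)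

lemma uryB_li [NeZero m] : LinearIndependent ℝ (uryB m n) := by
  rw [Fintype.linearIndependent_iff]
  intro g hg i
  have key : ∀ p : Fin m × {c : Fin n // c ≠ 0}, g (some p) = 0 := by
    intro p
    have := congrFun hg (p.1, p.2.1)
    rw [Finset.sum_apply] at this
    rw [Finset.sum_eq_single (some p)] at this
    · simpa [uryB, p.2.2] using this
    · rintro i _ hi
      cases i with
      | none => simp [uryB, p.2.2]
      | some q =>
          have hq : q ≠ p := fun h => hi (by rw [h])
          have hpq : ¬ (p.1 = q.1 ∧ p.2.1 = q.2.1) := by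
            rintro ⟨h1, h2⟩
            exact hq (Prod.ext h1.symm (Subtype.ext h2.symm))
          simp [uryB, Prod.ext_iff, hpq, p.2.2]
    · simp
  cases i with
  | some p => exact key p
  | none =>
      obtain ⟨j0⟩ : Nonempty (Fin m) := ⟨⟨0, Nat.pos_of_ne_zero (NeZero.ne m)⟩⟩
      have := congrFun hg (j0, 0)
      rw [Finset.sum_apply] at this
      rw [Finset.sum_eq_single none] at this
      · simpa [uryB] using this
      · rintro i _ hi
        cases i with
        | none => exact absurd rfl hi
        | some q =>
            simp [uryB, Prod.ext_iff, q.2.2, key q]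
      · simp

end UryAux

/-- for `m ≥ 1`, `n ≥ 1`, the matrix `M^m` whose rows enumerate all `n^m`
possible quantised input sequences of length `m` has rank exactly `m*n - m + 1`. -/
theorem uryM_rank (m n : ℕ) (hm : 1 ≤ m) (hn : 1 ≤ n) :
    (uryM m n).rank = m * n - m + 1 := by
  haveI : NeZero n := ⟨by omega⟩
  haveI : NeZero m := ⟨by omega⟩
  rw [Matrix.rank_eq_finrank_span_row, Matrix.row, UryAux.span_eq,
    finrank_span_eq_card (UryAux.uryB_li m n)]
  have hcard : Fintype.card {c : Fin n // c ≠ 0} = n - 1 := by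
    rw [Fintype.card_subtype_compl]
    simp
  rw [Fintype.card_option, Fintype.card_prod, Fintype.card_fin, hcard]
  have : m ≤ m * n := Nat.le_mul_of_pos_right m (by omega)
  have : m * (n - 1) = m * n - m := by
    rw [Nat.mul_sub]
    simp
  omega
end

section
/- If the matrix M^m built from all input sequences of length m has rank mn − m + 1, then the matrix M^{m+1} built from all input sequences of length m+1 has rank (m+1)n − (m+1) + 1 = mn − m + n. Specifically, M^{m+1} can be written as the block matrix with block rows [G^s, M^m] for s = 1,…,n, where G^s has all entries of column s equal to 1 and all other entries 0, and this block matrix has exactly n−1 more independent rows than M^m. -/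
open Submodule Set Module

/-- Auxiliary rank computation: adjoining indicator columns `δ_s` to a family of rows `r k`
(each of constant entry-sum `c ≠ 0`) increases the dimension of the span by `n - 1`. -/
theorem uryM_aux_rank {n : ℕ} (hn : 1 ≤ n) {K J : Type*} [Fintype K] [Fintype J] [Nonempty K]
    (r : K → (J → ℝ)) (c : ℝ) (hc : c ≠ 0) (hr : ∀ k, ∑ j, r k j = c) :
    finrank ℝ (span ℝ (Set.range (fun sk : Fin n × K =>
      (Sum.elim (fun t => if sk.1 = t then (1:ℝ) else 0) (r sk.2) : Fin n ⊕ J → ℝ)))) =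
      (n - 1) + finrank ℝ (span ℝ (Set.range r)) := by
  haveI : NeZero n := ⟨by omega⟩
  set δ : Fin n → (Fin n → ℝ) := fun s t => if s = t then (1:ℝ) else 0 with hδ
  set f : Fin n × K → (Fin n ⊕ J → ℝ) :=
    fun sk => (Sum.elim (δ sk.1) (r sk.2) : Fin n ⊕ J → ℝ) with hf
  set g : Fin n × K → (Fin n → ℝ) × (J → ℝ) := fun sk => (δ sk.1, r sk.2) with hg
  let E := LinearEquiv.sumArrowLequivProdArrow (Fin n) J ℝ ℝ
  have h1 : finrank ℝ (span ℝ (Set.range f)) = finrank ℝ (span ℝ (Set.range g)) := by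
    rw [← LinearEquiv.finrank_map_eq E (span ℝ (Set.range f)), Submodule.map_span,
      ← Set.range_comp]
    rfl
  rw [h1]
  set S := span ℝ (Set.range g) with hS
  let π : (Fin n → ℝ) × (J → ℝ) →ₗ[ℝ] (J → ℝ) := LinearMap.snd ℝ _ _
  let L1 : (Fin n → ℝ) →ₗ[ℝ] ℝ :=
    { toFun := fun v => ∑ t, v t
      map_add' := fun a b => by simp [Finset.sum_add_distrib]
      map_smul' := fun a b => by simp [Finset.mul_sum] }
  let L2 : (J → ℝ) →ₗ[ℝ] ℝ :=
    { toFun := fun w => ∑ j, w j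
      map_add' := fun a b => by simp [Finset.sum_add_distrib]
      map_smul' := fun a b => by simp [Finset.mul_sum] }
  let Λ : (Fin n → ℝ) × (J → ℝ) →ₗ[ℝ] ℝ :=
    c • (L1.comp (LinearMap.fst ℝ _ _)) - L2.comp π
  have hSΛ : S ≤ LinearMap.ker Λ := by
    rw [hS, span_le]
    rintro _ ⟨sk, rfl⟩
    simp [Λ, L1, L2, π, g, δ, hr, Finset.sum_ite_eq]
  have s0 : Fin n := ⟨0, by omega⟩
  obtain ⟨k0⟩ := ‹Nonempty K›
  have hinf : S ⊓ LinearMap.ker π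
      = Submodule.map (LinearMap.inl ℝ (Fin n → ℝ) (J → ℝ)) (LinearMap.ker L1) := by
    ext ⟨v, w⟩
    simp only [Submodule.mem_inf, LinearMap.mem_ker, Submodule.mem_map, LinearMap.inl_apply,
      Prod.mk.injEq, LinearMap.snd_apply, π]
    constructor
    · rintro ⟨hvS, hw⟩
      refine ⟨v, ?_, rfl, hw.symm⟩
      have h0 := hSΛ hvS
      rw [LinearMap.mem_ker] at h0
      have h0' : c * ∑ t, v t = 0 := by
        simpa [Λ, L1, L2, π, hw] using h0
      simpa only [LinearMap.mem_ker, L1, LinearMap.coe_mk, AddHom.coe_mk]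
        using (mul_eq_zero.1 h0').resolve_left hc
    · rintro ⟨v', hv', rfl, rfl⟩
      simp only [LinearMap.mem_ker, L1, LinearMap.coe_mk, AddHom.coe_mk] at hv'
      refine ⟨?_, rfl⟩
      have hvsum : (v', (0 : J → ℝ)) = ∑ s, v' s • g (s, k0) := by
        refine Prod.ext ?_ ?_
        · simp only [Prod.fst_sum, Prod.smul_fst, g]
          funext t
          simp only [Finset.sum_apply, Pi.smul_apply, δ, smul_eq_mul, mul_ite, mul_one, mul_zero]
          simp [Finset.sum_ite_eq', hv']
        · simp only [Prod.snd_sum, Prod.smul_snd, g]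
          rw [← Finset.sum_smul, hv', zero_smul]
      rw [hvsum]
      exact sum_mem fun s _ => smul_mem _ _ (subset_span ⟨(s, k0), rfl⟩)
  have hmap : Submodule.map π S = span ℝ (Set.range r) := by
    rw [hS, Submodule.map_span, ← Set.range_comp]
    have : (⇑π ∘ g) = r ∘ Prod.snd := rfl
    rw [this, Set.range_comp, Prod.range_snd, Set.image_univ]
  have hrn := LinearMap.finrank_range_add_finrank_ker (π.domRestrict S)
  rw [LinearMap.range_domRestrict] at hrn
  have hker : finrank ℝ (LinearMap.ker (π.domRestrict S))
      = finrank ℝ ↥(S ⊓ LinearMap.ker π) := by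
    have e1 : LinearMap.ker (π.domRestrict S)
        = Submodule.comap S.subtype (S ⊓ LinearMap.ker π) := by
      rw [LinearMap.ker_domRestrict]
      ext x
      simp [x.2]
    rw [e1]
    exact (Submodule.comapSubtypeEquivOfLe inf_le_left).finrank_eq
  have hL1surj : Function.Surjective L1 := by
    intro x
    refine ⟨fun t => if t = s0 then x else 0, ?_⟩
    simp [L1, Finset.sum_ite_eq']
  have hL1 : finrank ℝ (LinearMap.ker L1) = n - 1 := by
    have h2 := LinearMap.finrank_range_add_finrank_ker L1
    rw [LinearMap.range_eq_top.2 hL1surj, finrank_top, finrank_self,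
      Module.finrank_fin_fun] at h2
    omega
  have hinlfin : finrank ℝ ↥(S ⊓ LinearMap.ker π) = n - 1 := by
    rw [hinf, ← hL1]
    exact (Submodule.equivMapOfInjective _ LinearMap.inl_injective
      (LinearMap.ker L1)).finrank_eq.symm
  rw [hmap, hker, hinlfin] at hrn
  omega

/-- if `M^m` has rank `m*n - m + 1`, then `M^{m+1}` has rank
`(m+1)n - (m+1) + 1 = m*n - m + n`, i.e. exactly `n - 1` more independent rows than `M^m`.
Moreover `M^{m+1}` can be written (up to re-indexing of rows and columns) as the block
matrix with block rows `[Gˢ, M^m]` for `s = 1,…,n`, where `Gˢ` has all entries of column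
`s` equal to `1` and all other entries `0`. -/
theorem uryM_rank_succ (m n : ℕ) (hm : 1 ≤ m) (hn : 1 ≤ n)
    (h : (uryM m n).rank = m * n - m + 1) :
    (uryM (m + 1) n).rank = m * n - m + n ∧
    (uryM (m + 1) n).rank = (uryM m n).rank + (n - 1) ∧
    ∃ (er : (Fin (m + 1) → Fin n) ≃ Fin n × (Fin m → Fin n))
      (ec : (Fin (m + 1) × Fin n) ≃ (Fin n ⊕ Fin m × Fin n)),
      ∀ k jc, uryM (m + 1) n k jc =
        Sum.elim (fun c : Fin n => if (er k).1 = c then (1 : ℝ) else 0)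
          (fun jc' : Fin m × Fin n => uryM m n (er k).2 jc') (ec jc) := by
  haveI : NeZero n := ⟨by omega⟩
  haveI : Nonempty (Fin m → Fin n) := ⟨fun _ => ⟨0, hn⟩⟩
  let er : (Fin (m + 1) → Fin n) ≃ Fin n × (Fin m → Fin n) :=
    { toFun := fun k => (k 0, fun i => k i.succ)
      invFun := fun p => Fin.cons p.1 p.2
      left_inv := fun k => Fin.cons_self_tail k
      right_inv := fun p => by
        refine Prod.ext ?_ ?_ <;> simp [Fin.cons_zero, Fin.cons_succ] }
  let ec : (Fin (m + 1) × Fin n) ≃ (Fin n ⊕ Fin m × Fin n) :=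
    { toFun := fun jc =>
        if h : jc.1 = Fin.last m then Sum.inl jc.2
        else Sum.inr (jc.1.castPred h, jc.2)
      invFun := Sum.elim (fun t => (Fin.last m, t)) (fun jc => (jc.1.castSucc, jc.2))
      left_inv := by
        rintro ⟨j, t⟩
        by_cases h : j = Fin.last m <;> simp [h, Fin.castSucc_castPred]
      right_inv := by
        rintro (t | ⟨j', t⟩)
        · simp
        · simp [Fin.castPred_castSucc, (Fin.castSucc_lt_last j').ne] }
  have key : ∀ k jc, uryM (m + 1) n k jc =
      Sum.elim (fun c : Fin n => if (er k).1 = c then (1 : ℝ) else 0)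
        (fun jc' : Fin m × Fin n => uryM m n (er k).2 jc') (ec jc) := by
    rintro k ⟨j, t⟩
    refine Fin.lastCases ?_ ?_ j
    · simp [uryM, er, ec, Fin.rev_last, Equiv.coe_fn_mk]
      rfl
    · intro j'
      simp [uryM, er, ec, (Fin.castSucc_lt_last j').ne, Fin.castPred_castSucc,
        Fin.rev_castSucc, Equiv.coe_fn_mk]
      rfl
  have hrank : (uryM (m + 1) n).rank = (n - 1) + (uryM m n).rank := by
    rw [Matrix.rank_eq_finrank_span_row, Matrix.rank_eq_finrank_span_row (uryM m n)]
    set fB : Fin n × (Fin m → Fin n) → (Fin n ⊕ Fin m × Fin n → ℝ) :=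
      fun sk => (Sum.elim (fun t => if sk.1 = t then (1:ℝ) else 0) (uryM m n sk.2)) with hfB
    let E := LinearEquiv.funCongrLeft ℝ ℝ ec.symm
    have hmapE : Submodule.map (E : _ →ₗ[ℝ] _) (span ℝ (Set.range (uryM (m + 1) n).row))
        = span ℝ (Set.range fB) := by
      rw [Submodule.map_span, ← Set.range_comp]
      have hcmp : (⇑E ∘ (uryM (m + 1) n).row) = fB ∘ er := by
        funext k
        funext z
        have hE : (⇑E ∘ (uryM (m + 1) n).row) k z = uryM (m + 1) n k (ec.symm z) := rfl
        rw [hE, key k (ec.symm z), Equiv.apply_symm_apply]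
        rfl
      simp only [LinearEquiv.coe_coe]
      rw [hcmp, Set.range_comp, Equiv.range_eq_univ, Set.image_univ]
    have h2 : finrank ℝ (span ℝ (Set.range (uryM (m + 1) n).row))
        = finrank ℝ (span ℝ (Set.range fB)) := by
      rw [← hmapE]
      exact (LinearEquiv.finrank_map_eq E _).symm
    rw [h2, hfB]
    refine uryM_aux_rank hn (uryM m n).row (m : ℝ) ?_ ?_
    · exact Nat.cast_ne_zero.2 (by omega)
    · intro k
      rw [Fintype.sum_prod_type]
      simp [uryM, Matrix.row, Finset.sum_ite_eq]
  refine ⟨?_, ?_, er, ec, key⟩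
  · rw [hrank, h]
    set a := m * n - m with ha
    omega
  · rw [hrank, add_comm]
end

section
/- One step of the Urysohn identification iteration strictly decreases the squared distance to any exact solution when the prediction error is nonzero: if U is any matrix with y_i = Σ_j U[j, k_{i−j+1}], Û is the current estimate, ŷ_i = Σ_j Û[j, k_{i−j+1}], and the update adds α(y_i − ŷ_i)/m to each entry Û[j, k_{i−j+1}] for j = 1,…,m, then the squared Frobenius distance e² = ‖U − Û‖² satisfies e²_new = e²_old − ((2α − α²)/m)(ŷ_i − y_i)². In particular, for α ∈ (0,2) the distance is non-increasing and strictly decreases whenever ŷ_i ≠ y_i. -/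
/-!
The update moves the error `U - Û` by the same amount `d = α (y - ŷ) / m` at the `m` entries
`(j, k_j)` and nowhere else, so its squared Frobenius norm changes by
`m d² - 2 d Σ_j (U - Û)[j, k_j] = m d² - 2 d (y - ŷ) = -((2α - α²) / m) (y - ŷ)²`.
-/

open Finset

section

variable {R ι κ : Type*} [CommRing R] [Fintype ι] [Fintype κ] [DecidableEq κ]

theorem sum_sq_sub_ite_eq (e : κ → R) (k : κ) (d : R) :
    ∑ c, (e c - if c = k then d else 0) ^ 2 = ∑ c, e c ^ 2 - 2 * d * e k + d ^ 2 := by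
  have hterm : ∀ c, (e c - if c = k then d else 0) ^ 2 =
      e c ^ 2 + if c = k then d ^ 2 - 2 * d * e k else 0 := by
    intro c
    split_ifs with h
    · subst h; ring
    · ring
  simp only [hterm, sum_add_distrib, sum_ite_eq', mem_univ, if_true]
  ring

theorem Matrix.sum_sum_sq_sub_ite_eq (E : Matrix ι κ R) (ks : ι → κ) (d : R) :
    ∑ j, ∑ c, (E j c - if c = ks j then d else 0) ^ 2 =
      ∑ j, ∑ c, E j c ^ 2 - 2 * d * ∑ j, E j (ks j) + Fintype.card ι * d ^ 2 := by
  simp only [sum_sq_sub_ite_eq, sum_add_distrib, sum_sub_distrib, mul_sum, sum_const,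
    card_univ, nsmul_eq_mul]

end

/-- one step of the Urysohn identification iteration. If `U` is any exact
Urysohn matrix (`y = Σ_j U[j, k_{i-j+1}]`), `Û` the current estimate with prediction
`ŷ = Σ_j Û[j, k_{i-j+1}]`, and the update adds `α (y - ŷ)/m` to each entry
`Û[j, k_{i-j+1}]`, then the squared Frobenius distance satisfies
`e²_new = e²_old − ((2α − α²)/m)(ŷ − y)²`; in particular for `α ∈ (0,2)` the distance is
non-increasing and strictly decreases whenever `ŷ ≠ y`. -/
theorem urysohn_update_error (m n : ℕ) (hm : 0 < m)
    (U Uhat Uhat' : Matrix (Fin m) (Fin n) ℝ) (ks : Fin m → Fin n) (α : ℝ)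
    (y yhat : ℝ)
    (hy : y = ∑ j : Fin m, U j (ks j))
    (hyhat : yhat = ∑ j : Fin m, Uhat j (ks j))
    (hupd : ∀ j c, Uhat' j c = Uhat j c + if c = ks j then α * (y - yhat) / m else 0) :
    (∑ j : Fin m, ∑ c : Fin n, (U j c - Uhat' j c) ^ 2) =
      (∑ j : Fin m, ∑ c : Fin n, (U j c - Uhat j c) ^ 2)
        - ((2 * α - α ^ 2) / m) * (yhat - y) ^ 2 ∧
    (α ∈ Set.Ioo (0 : ℝ) 2 →
      (∑ j : Fin m, ∑ c : Fin n, (U j c - Uhat' j c) ^ 2) ≤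
        (∑ j : Fin m, ∑ c : Fin n, (U j c - Uhat j c) ^ 2) ∧
      (yhat ≠ y →
        (∑ j : Fin m, ∑ c : Fin n, (U j c - Uhat' j c) ^ 2) <
          (∑ j : Fin m, ∑ c : Fin n, (U j c - Uhat j c) ^ 2))) := by
  have herr : ∀ j c, U j c - Uhat' j c =
      (U - Uhat) j c - if c = ks j then α * (y - yhat) / m else 0 := by
    intro j c
    rw [hupd, Matrix.sub_apply]
    ring
  have hresidual : ∑ j, (U - Uhat) j (ks j) = y - yhat := by
    simp only [Matrix.sub_apply, sum_sub_distrib, hy, hyhat]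
  have hnorm : ∑ j, ∑ c, (U j c - Uhat' j c) ^ 2 =
      ∑ j, ∑ c, (U j c - Uhat j c) ^ 2 - ((2 * α - α ^ 2) / m) * (yhat - y) ^ 2 := by
    simp only [herr]
    rw [Matrix.sum_sum_sq_sub_ite_eq, hresidual, Fintype.card_fin]
    simp only [Matrix.sub_apply]
    field_simp
    ring
  refine ⟨hnorm, fun ⟨hα0, hα2⟩ => ?_⟩
  have hcoef : 0 < (2 * α - α ^ 2) / m := div_pos (by nlinarith) (by exact_mod_cast hm)
  rw [hnorm]
  exact ⟨sub_le_self _ (mul_nonneg hcoef.le (sq_nonneg _)),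
    fun hne => sub_lt_self _ (mul_pos hcoef (sq_pos_of_ne_zero (sub_ne_zero.2 hne)))⟩
end

section
/- The Urysohn identification update with α = 1 coincides with a Kaczmarz projection step for the linear system M̃ Z = Ỹ: since the row of M̃ corresponding to output y_i has exactly m ones (at positions n(j−1)+k_{i−j+1}, j = 1,…,m) and squared norm m, the Kaczmarz update X' = X + ((y_i − ⟨row, X⟩)/m)·row adds (y_i − ŷ_i)/m to exactly the entries Z_{n(j−1)+k_{i−j+1}}, j = 1,…,m, and leaves all other entries unchanged. -/
/-!
The `i`-th row of `M̃` is the indicator of the graph `{(j, k j)}` of the index map `j ↦ k_{i-j+1}`: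
it has exactly one `1` in each row block. Pairing it with `Z` therefore picks out one entry per
block, which gives both `⟨row, Z⟩ = ŷ` and, pairing it with itself, `‖row‖² = m`; and adding a
multiple of it moves exactly the entries on the graph.
-/

section GraphIndicator

variable {ι κ R : Type*} [DecidableEq κ]

def graphIndicator [Zero R] [One R] (f : ι → κ) (jc : ι × κ) : R :=
  if jc.2 = f jc.1 then 1 else 0

@[simp]
lemma graphIndicator_apply_self [Zero R] [One R] (f : ι → κ) (j : ι) :
    graphIndicator (R := R) f (j, f j) = 1 :=
  if_pos rfl

lemma graphIndicator_apply_of_ne [Zero R] [One R] (f : ι → κ) {j : ι} {c : κ} (hc : c ≠ f j) :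
    graphIndicator (R := R) f (j, c) = 0 :=
  if_neg hc

variable [Fintype ι] [Fintype κ] [Semiring R]

lemma sum_graphIndicator_mul (f : ι → κ) (Z : ι × κ → R) :
    ∑ jc, graphIndicator f jc * Z jc = ∑ j, Z (j, f j) := by
  rw [Fintype.sum_prod_type]
  refine Finset.sum_congr rfl fun j _ => ?_
  simp [graphIndicator]

lemma sum_graphIndicator_sq (f : ι → κ) :
    ∑ jc, graphIndicator (R := R) f jc ^ 2 = Fintype.card ι := by
  simp_rw [sq, sum_graphIndicator_mul, graphIndicator_apply_self, Finset.sum_const,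
    Finset.card_univ, nsmul_one]

end GraphIndicator

theorem urysohn_update_is_kaczmarz_general (m n : ℕ) (ks : Fin m → Fin n)
    (Z : Fin m × Fin n → ℝ) (y : ℝ)
    (row : Fin m × Fin n → ℝ)
    (hrow : ∀ jc : Fin m × Fin n, row jc = if jc.2 = ks jc.1 then 1 else 0)
    (yhat : ℝ) (hyhat : yhat = ∑ j : Fin m, Z (j, ks j))
    (X' : Fin m × Fin n → ℝ)
    (hX' : X' = fun jc => Z jc + ((y - yhat) / m) * row jc) :
    (∑ jc : Fin m × Fin n, row jc ^ 2) = (m : ℝ) ∧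
    (∑ jc : Fin m × Fin n, row jc * Z jc) = yhat ∧
    (∀ j : Fin m, X' (j, ks j) = Z (j, ks j) + (y - yhat) / m) ∧
    (∀ j : Fin m, ∀ c : Fin n, c ≠ ks j → X' (j, c) = Z (j, c)) := by
  have hrow : row = graphIndicator ks := funext hrow
  subst hrow hX'
  refine ⟨?_, (sum_graphIndicator_mul ks Z).trans hyhat.symm, fun j => ?_, fun j c hc => ?_⟩
  · simpa using sum_graphIndicator_sq (R := ℝ) ks
  · simp
  · simp [graphIndicator_apply_of_ne ks hc]

/-- the Urysohn identification update with `α = 1` coincides with a Kaczmarz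
projection step for the linear system `M̃ Z = Ỹ`. The row of `M̃` corresponding to output
`y_i` has exactly `m` ones (at the positions `(j, k_{i-j+1})`, one per row block) and
squared norm `m`; the Kaczmarz update `X' = X + ((y_i − ⟨row, X⟩)/m)·row` adds
`(y_i − ŷ_i)/m` to exactly the entries `Z_{(j, k_{i-j+1})}` and leaves all other entries
unchanged. -/
theorem urysohn_update_is_kaczmarz (m n : ℕ) (hm : 0 < m) (ks : Fin m → Fin n)
    (Z : Fin m × Fin n → ℝ) (y : ℝ)
    (row : Fin m × Fin n → ℝ)
    (hrow : ∀ jc : Fin m × Fin n, row jc = if jc.2 = ks jc.1 then 1 else 0)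
    (yhat : ℝ) (hyhat : yhat = ∑ j : Fin m, Z (j, ks j))
    (X' : Fin m × Fin n → ℝ)
    (hX' : X' = fun jc => Z jc + ((y - yhat) / m) * row jc) :
    (∑ jc : Fin m × Fin n, row jc ^ 2) = (m : ℝ) ∧
    (∑ jc : Fin m × Fin n, row jc * Z jc) = yhat ∧
    (∀ j : Fin m, X' (j, ks j) = Z (j, ks j) + (y - yhat) / m) ∧
    (∀ j : Fin m, ∀ c : Fin n, c ≠ ks j → X' (j, c) = Z (j, c)) :=
  urysohn_update_is_kaczmarz_general m n ks Z y row hrow yhat hyhat X' hX'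
end

section
/- The set of Urysohn matrices exactly reproducing a given input-output behaviour is an affine subspace of dimension m − 1: if U and U' are two m × n matrices producing the same output Σ_j U[j, k_{m−j+1}] = Σ_j U'[j, k_{m−j+1}] for every input sequence k ∈ (Fin n)^m, then there exist constants c_1,…,c_m ∈ ℝ with c_1 + ⋯ + c_m = 0 such that U'[j,c] = U[j,c] + c_j for all j, c. Conversely, adding any such constants row-wise preserves all outputs. -/
/-- The output of the discrete Urysohn operator with matrix `U` on the input window
`k = (k_1, …, k_m)` (with `k_m` the most recent input): `y(k) = Σ_{j=1}^m U[j, k_{m-j+1}]`. -/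
def uryOut {m n : ℕ} (U : Matrix (Fin m) (Fin n) ℝ) (k : Fin m → Fin n) : ℝ :=
  ∑ j : Fin m, U j (k j.rev)

/-!
Only the differences `U' - U` matter, and a family of functions `f_j` has
`Σ_j f_j (k_j) = 0` for every choice of arguments `k` exactly when every `f_j` is
constant, with constants summing to zero: changing one argument `k_i` while keeping
the others fixed must leave the sum, hence `f_i (k_i)`, unchanged.
-/

open Finset Function

section SeparableSum

variable {ι α M : Type*} [Fintype ι] [DecidableEq ι] [AddCancelCommMonoid M]

theorem apply_eq_of_forall_sum_apply_eq {f : ι → α → M} {s : M}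
    (h : ∀ k : ι → α, ∑ i, f i (k i) = s) (i : ι) (a b : α) : f i a = f i b := by
  have hsum : ∑ j, f j (update (fun _ => b) i a j) = ∑ j, f j b := by
    rw [h, h fun _ => b]
  rw [sum_eq_sum_iff_single (mem_univ i) fun j _ hji => by rw [update_of_ne hji]]
    at hsum
  simpa using hsum

theorem forall_sum_apply_eq_zero_iff {f : ι → α → M} :
    (∀ k : ι → α, ∑ i, f i (k i) = 0) ↔ ∃ c : ι → M, ∑ i, c i = 0 ∧ ∀ i a, f i a = c i := by
  constructor
  · intro h
    rcases isEmpty_or_nonempty α with _ | ⟨⟨a₀⟩⟩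
    · exact ⟨0, by simp, fun _ a => isEmptyElim a⟩
    · exact ⟨fun i => f i a₀, h fun _ => a₀,
        fun i a => apply_eq_of_forall_sum_apply_eq h i a a₀⟩
  · rintro ⟨c, hc, hf⟩ k
    simp only [hf, hc]

end SeparableSum

theorem forall_uryOut_eq_iff {m n : ℕ} (U U' : Matrix (Fin m) (Fin n) ℝ) :
    (∀ k, uryOut U k = uryOut U' k) ↔
      ∃ c : Fin m → ℝ, ∑ j, c j = 0 ∧ ∀ j a, U' j a = U j a + c j := by
  have hdiff : (∀ k, uryOut U k = uryOut U' k) ↔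
      ∀ k : Fin m → Fin n, ∑ j, (U' j (k j) - U j (k j)) = 0 := by
    simp only [uryOut, eq_comm (a := ∑ j, U j _), ← sub_eq_zero (b := ∑ j, U j _),
      ← sum_sub_distrib]
    exact ⟨fun h k => by simpa using h (k ∘ Fin.rev), fun h k => h (k ∘ Fin.rev)⟩
  rw [hdiff, forall_sum_apply_eq_zero_iff (f := fun j a => U' j a - U j a)]
  simp only [sub_eq_iff_eq_add']

theorem urysohn_equivalence_class_general (m n : ℕ)
    (U U' : Matrix (Fin m) (Fin n) ℝ) :
    ((∀ k : Fin m → Fin n, uryOut U k = uryOut U' k) →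
      ∃ c : Fin m → ℝ, (∑ j : Fin m, c j = 0) ∧ ∀ j cc, U' j cc = U j cc + c j) ∧
    (∀ c : Fin m → ℝ, (∑ j : Fin m, c j = 0) →
      (∀ j cc, U' j cc = U j cc + c j) →
      ∀ k : Fin m → Fin n, uryOut U k = uryOut U' k) :=
  ⟨(forall_uryOut_eq_iff U U').mp,
    fun c hc hU => (forall_uryOut_eq_iff U U').mpr ⟨c, hc, hU⟩⟩

/-- the set of Urysohn matrices reproducing a given input-output behaviour
is an affine subspace of dimension `m − 1`: two matrices produce the same output on every
input sequence if and only if they differ by row-wise constants `c_1, …, c_m` summing to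
zero. -/
theorem urysohn_equivalence_class (m n : ℕ) (hn : 0 < n)
    (U U' : Matrix (Fin m) (Fin n) ℝ) :
    ((∀ k : Fin m → Fin n, uryOut U k = uryOut U' k) →
      ∃ c : Fin m → ℝ, (∑ j : Fin m, c j = 0) ∧ ∀ j cc, U' j cc = U j cc + c j) ∧
    (∀ c : Fin m → ℝ, (∑ j : Fin m, c j = 0) →
      (∀ j cc, U' j cc = U j cc + c j) →
      ∀ k : Fin m → Fin n, uryOut U k = uryOut U' k) :=
  urysohn_equivalence_class_general m n U U'
end

section
/- Fixing m − 1 entries of the Urysohn matrix, at most one per row, uniquely determines the matrix within its output-equivalence class: if U and U' are output-equivalent m × n Urysohn matrices, and there exist m − 1 positions (j_1, c_1),…,(j_{m−1}, c_{m−1}) with pairwise distinct row indices j_r such that U[j_r, c_r] = U'[j_r, c_r] for all r, then U = U'. -/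
section Urysohn

variable {m n : ℕ}

lemma uryOut_sub (U U' : Matrix (Fin m) (Fin n) ℝ) (k : Fin m → Fin n) :
    uryOut (U - U') k = uryOut U k - uryOut U' k := by
  simp only [uryOut, Matrix.sub_apply, Finset.sum_sub_distrib]

lemma uryOut_const (U : Matrix (Fin m) (Fin n) ℝ) (a : Fin n) :
    uryOut U (fun _ => a) = ∑ j, U j a :=
  rfl

lemma uryOut_update_rev (U : Matrix (Fin m) (Fin n) ℝ) (k : Fin m → Fin n) (j : Fin m)
    (x : Fin n) :
    uryOut U (Function.update k j.rev x) = uryOut U k - U j (k j.rev) + U j x := by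
  simp only [uryOut]
  rw [← Finset.add_sum_erase _ _ (Finset.mem_univ j),
    ← Finset.add_sum_erase _ (fun i => U i (k i.rev)) (Finset.mem_univ j),
    Function.update_self]
  have hrest : ∀ i ∈ Finset.univ.erase j, U i (Function.update k j.rev x i.rev) = U i (k i.rev) :=
    fun i hi => by
      rw [Function.update_of_ne (Fin.rev_injective.ne (Finset.ne_of_mem_erase hi))]
  rw [Finset.sum_congr rfl hrest]
  ring

lemma row_const_of_uryOut_eq_zero {D : Matrix (Fin m) (Fin n) ℝ}
    (hD : ∀ k, uryOut D k = 0) (j : Fin m) (a b : Fin n) : D j a = D j b := by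
  have h := uryOut_update_rev D (fun _ => a) j b
  rw [hD, hD] at h
  linarith

end Urysohn

lemma mem_range_of_ne_of_not_mem_range {α β : Type*} [Fintype α] [Fintype β] {f : α → β}
    (hf : Function.Injective f) (hcard : Fintype.card β ≤ Fintype.card α + 1) {i j : β}
    (hj : j ∉ Set.range f) (hij : i ≠ j) : i ∈ Set.range f := by
  classical
  have hsub : Finset.univ.image f ⊆ Finset.univ.erase j := fun b hb => by
    obtain ⟨a, -, rfl⟩ := Finset.mem_image.mp hb
    exact Finset.mem_erase.mpr ⟨fun h => hj ⟨a, h⟩, Finset.mem_univ _⟩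
  have heq : Finset.univ.image f = Finset.univ.erase j := by
    refine Finset.eq_of_subset_of_card_le hsub ?_
    rw [Finset.card_erase_of_mem (Finset.mem_univ j), Finset.card_univ,
      Finset.card_image_of_injective _ hf, Finset.card_univ]
    omega
  obtain ⟨a, -, ha⟩ := Finset.mem_image.mp (heq ▸ Finset.mem_erase.mpr ⟨hij, Finset.mem_univ i⟩)
  exact ⟨a, ha⟩

theorem urysohn_fixed_entries_unique_general (m n : ℕ)
    (U U' : Matrix (Fin m) (Fin n) ℝ)
    (hequiv : ∀ k : Fin m → Fin n, uryOut U k = uryOut U' k)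
    (pos : Fin (m - 1) → Fin m × Fin n)
    (hinj : Function.Injective fun r => (pos r).1)
    (hagree : ∀ r : Fin (m - 1), U (pos r).1 (pos r).2 = U' (pos r).1 (pos r).2) :
    U = U' := by
  ext j a
  set D := U - U'
  have hD : ∀ k, uryOut D k = 0 := fun k => by rw [uryOut_sub, hequiv, sub_self]
  have hfixed_row : ∀ i ∈ Set.range fun r => (pos r).1, D i a = 0 := by
    rintro _ ⟨r, rfl⟩
    rw [row_const_of_uryOut_eq_zero hD _ a (pos r).2]
    exact sub_eq_zero.mpr (hagree r)
  suffices D j a = 0 from sub_eq_zero.mp this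
  by_cases hj : j ∈ Set.range fun r => (pos r).1
  · exact hfixed_row j hj
  · have hcard : Fintype.card (Fin m) ≤ Fintype.card (Fin (m - 1)) + 1 := by
      simp only [Fintype.card_fin]; omega
    have hcol := hD fun _ => a
    rwa [uryOut_const, ← Finset.add_sum_erase _ _ (Finset.mem_univ j),
      Finset.sum_eq_zero fun i hi => hfixed_row i <|
        mem_range_of_ne_of_not_mem_range hinj hcard hj (Finset.ne_of_mem_erase hi),
      add_zero] at hcol

/-- fixing `m − 1` entries of the Urysohn matrix, at most one per row,
uniquely determines the matrix within its output-equivalence class: if `U` and `U'` are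
output-equivalent and agree at `m − 1` positions with pairwise distinct row indices,
then `U = U'`. -/
theorem urysohn_fixed_entries_unique (m n : ℕ) (hm : 0 < m) (hn : 0 < n)
    (U U' : Matrix (Fin m) (Fin n) ℝ)
    (hequiv : ∀ k : Fin m → Fin n, uryOut U k = uryOut U' k)
    (pos : Fin (m - 1) → Fin m × Fin n)
    (hinj : Function.Injective fun r => (pos r).1)
    (hagree : ∀ r : Fin (m - 1), U (pos r).1 (pos r).2 = U' (pos r).1 (pos r).2) :
    U = U' :=
  urysohn_fixed_entries_unique_general m n U U' hequiv pos hinj hagree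
end
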